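/- arXiv:2402.16765 — 2 statements merged into one kernel-verified Lean document; each statement's English description precedes it below -/
import Mathlib

section
/- Let n ≥ 1, let R = diag(r_1,…,r_n) with all r_i > 0, let L_B be a real symmetric positive semidefinite n×n matrix with L_B·1 = 0, let L = R^{-1/2} L_B R^{-1/2}, and let V be a real orthogonal n×n matrix whose k-th column v_k satisfies L v_k = λ_k v_k with 0 = λ_1 ≤ λ_2 ≤ … ≤ λ_n and v_1 = R^{1/2}·1/√(Σ_i r_i). Let m, d > 0. Suppose for each k ∈ {1,…,n} the function h_k : [0,∞) → ℝ is twice differentiable and satisfies m·h_k''(t) + d·h_k'(t) + λ_k·h_k(t) = 0 for all t ≥ 0, with h_k(0) = 0 and h_k'(0) = 1/m. Fix u_0 ∈ ℝ^n, set α = V^T R^{-1/2} u_0, and define ω(t) = Σ_{k=1}^n α_k h_k(t) R^{-1/2} v_k and θ(t) = ∫_0^t ω(s) ds. Then ω(0) = 0 and for every t ≥ 0 and every i ∈ {1,…,n}: r_i·m·ω_i'(t) + r_i·d·ω_i(t) + (L_B θ(t))_i = u_{0,i}. In other words, the decomposed signal ω is exactly the frequency response of the proportional power network (with inertias m_i =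 r_i m and dampings d_i = r_i d) to the step power disturbance p(t) = u_0 for t ≥ 0. -/
open Matrix

/-- Lemma 1 (time domain): under proportionality (inertias `mᵢ = rᵢ m`, dampings
`dᵢ = rᵢ d`), the modal superposition `ω(t) = ∑ₖ αₖ hₖ(t) R^{-1/2} vₖ`, with
`α = Vᵀ R^{-1/2} u₀` and `hₖ` the step responses of the modal transfer functions
(`m hₖ'' + d hₖ' + λₖ hₖ = 0`, `hₖ(0) = 0`, `hₖ'(0) = 1/m`), satisfies `ω(0) = 0`
and the swing dynamics `R m ω' + R d ω + L_B θ = u₀` (with `θ = ∫₀ᵗ ω`) for all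
`t ≥ 0`, i.e. it is exactly the frequency response to the step disturbance `u₀`. -/
theorem stmt0 (n : ℕ) (hn : 0 < n)
    (r : Fin n → ℝ) (hr : ∀ i, 0 < r i)
    (LB : Matrix (Fin n) (Fin n) ℝ)
    (hsymm : LB.IsSymm) (hpsd : LB.PosSemidef)
    (hker : LB *ᵥ (fun _ => (1 : ℝ)) = 0)
    (L : Matrix (Fin n) (Fin n) ℝ)
    (hL : ∀ i j, L i j = (Real.sqrt (r i))⁻¹ * LB i j * (Real.sqrt (r j))⁻¹)
    (V : Matrix (Fin n) (Fin n) ℝ) (hV : V.transpose * V = 1)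
    (lam : Fin n → ℝ) (hlam0 : lam ⟨0, hn⟩ = 0) (hlamMono : Monotone lam)
    (heig : ∀ k, L *ᵥ (fun j => V j k) = lam k • (fun j => V j k))
    (hv1 : ∀ j, V j ⟨0, hn⟩ = Real.sqrt (r j) / Real.sqrt (∑ i, r i))
    (m d : ℝ) (hm : 0 < m) (hd : 0 < d)
    (h h' h'' : Fin n → ℝ → ℝ)
    (hderiv1 : ∀ k t, 0 ≤ t → HasDerivAt (h k) (h' k t) t)
    (hderiv2 : ∀ k t, 0 ≤ t → HasDerivAt (h' k) (h'' k t) t)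
    (hode : ∀ k t, 0 ≤ t → m * h'' k t + d * h' k t + lam k * h k t = 0)
    (hinit0 : ∀ k, h k 0 = 0) (hinit1 : ∀ k, h' k 0 = 1 / m)
    (u0 : Fin n → ℝ)
    (α : Fin n → ℝ) (hα : ∀ k, α k = ∑ j, V j k * ((Real.sqrt (r j))⁻¹ * u0 j))
    (ω : Fin n → ℝ → ℝ)
    (hω : ∀ i t, ω i t = ∑ k, α k * h k t * ((Real.sqrt (r i))⁻¹ * V i k))
    (θ : Fin n → ℝ → ℝ)
    (hθ : ∀ i t, θ i t = ∫ s in (0 : ℝ)..t, ω i s) :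
    (∀ i, ω i 0 = 0) ∧
    (∀ t, 0 ≤ t → ∀ i,
      r i * m * deriv (ω i) t + r i * d * ω i t + (∑ j, LB i j * θ j t) = u0 i) := by
  have hs : ∀ i, (0:ℝ) < Real.sqrt (r i) := fun i => Real.sqrt_pos.2 (hr i)
  have hsne : ∀ i, Real.sqrt (r i) ≠ 0 := fun i => (hs i).ne'
  have hss : ∀ i, Real.sqrt (r i) * Real.sqrt (r i) = r i :=
    fun i => Real.mul_self_sqrt (hr i).le
  refine ⟨fun i => by simp [hω, hinit0], ?_⟩
  intro t ht i
  -- continuity facts about h k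
  have hcontIoi : ∀ k, ContinuousOn (h k) (Set.Ioi (0:ℝ)) :=
    fun k x hx => (hderiv1 k x (le_of_lt hx)).continuousAt.continuousWithinAt
  have hcontIcc : ∀ k (b : ℝ), ContinuousOn (h k) (Set.Icc 0 b) :=
    fun k b x hx => (hderiv1 k x hx.1).continuousAt.continuousWithinAt
  have hint : ∀ k (b : ℝ), 0 ≤ b → IntervalIntegrable (h k) MeasureTheory.volume 0 b := by
    intro k b hb
    exact ContinuousOn.intervalIntegrable (by rw [Set.uIcc_of_le hb]; exact hcontIcc k b)
  set H : Fin n → ℝ := fun k => ∫ s in (0:ℝ)..t, h k s with hHdef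
  -- Key integrated modal identity: m h'(t) + d h(t) + λ H(t) = 1
  have hA : ∀ k, m * h' k t + d * h k t + lam k * H k = 1 := by
    intro k
    set F : ℝ → ℝ := fun u => m * h' k u + d * h k u + lam k * ∫ s in (0:ℝ)..u, h k s
      with hFdef
    have hF0 : F 0 = 1 := by
      simp [hFdef, hinit0 k, hinit1 k]
      field_simp
    have hFcont : ContinuousOn F (Set.Icc 0 t) := by
      apply ContinuousOn.add
      apply ContinuousOn.add
      · exact continuousOn_const.mul
          (fun x hx => (hderiv2 k x hx.1).continuousAt.continuousWithinAt)
      · exact continuousOn_const.mul (hcontIcc k t)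
      · apply continuousOn_const.mul
        have := intervalIntegral.continuousOn_primitive_interval
          (f := h k) (a := (0:ℝ)) (b := t) (μ := MeasureTheory.volume)
          (by rw [Set.uIcc_of_le ht]; exact (hcontIcc k t).integrableOn_Icc)
        rwa [Set.uIcc_of_le ht] at this
    have hFderiv : ∀ x ∈ Set.Ioo (0:ℝ) t, HasDerivWithinAt F 0 (Set.Ioi x) x := by
      intro x hx
      have hx0 : (0:ℝ) < x := hx.1
      have hH : HasDerivAt (fun u => ∫ s in (0:ℝ)..u, h k s) (h k x) x :=
        intervalIntegral.integral_hasDerivAt_right (hint k x hx0.le)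
          (ContinuousOn.stronglyMeasurableAtFilter isOpen_Ioi (hcontIoi k) x hx0)
          (hderiv1 k x hx0.le).continuousAt
      have hD : HasDerivAt F
          (m * h'' k x + d * h' k x + lam k * h k x) x :=
        (((hderiv2 k x hx0.le).const_mul m).add
          ((hderiv1 k x hx0.le).const_mul d)).add (hH.const_mul (lam k))
      rw [hode k x hx0.le] at hD
      exact hD.hasDerivWithinAt
    have hzero : (0:ℝ) = F t - F 0 := by
      have := intervalIntegral.integral_eq_sub_of_hasDeriv_right_of_le ht hFcont
        hFderiv (f' := fun _ => (0:ℝ)) intervalIntegrable_const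
      simpa using this
    have : F t = 1 := by rw [hF0] at hzero; linarith
    simpa [hFdef, hHdef] using this
  -- derivative of ω i
  have hωfun : ω i = fun u => ∑ k, α k * h k u * ((Real.sqrt (r i))⁻¹ * V i k) :=
    funext (hω i)
  have hderivω : HasDerivAt (ω i)
      (∑ k, α k * h' k t * ((Real.sqrt (r i))⁻¹ * V i k)) t := by
    rw [hωfun]
    exact HasDerivAt.fun_sum
      (fun k _ => ((hderiv1 k t ht).const_mul (α k)).mul_const _)
  -- θ formula
  have hθ' : ∀ j, θ j t = ∑ k, α k * H k * ((Real.sqrt (r j))⁻¹ * V j k) := by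
    intro j
    rw [hθ j t]
    have : (∫ s in (0:ℝ)..t, ω j s)
        = ∫ s in (0:ℝ)..t, ∑ k, α k * h k s * ((Real.sqrt (r j))⁻¹ * V j k) := by
      congr 1; ext s; exact hω j s
    rw [this, intervalIntegral.integral_finset_sum]
    · refine Finset.sum_congr rfl fun k _ => ?_
      rw [intervalIntegral.integral_mul_const, intervalIntegral.integral_const_mul]
    · exact fun k _ => ((hint k t ht).const_mul (α k)).mul_const _
  -- eigenvector fact
  have heig' : ∀ k, ∑ j, LB i j * ((Real.sqrt (r j))⁻¹ * V j k)
      = Real.sqrt (r i) * (lam k * V i k) := by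
    intro k
    have h1 : ∑ j, L i j * V j k = lam k * V i k := congrFun (heig k) i
    have h2 : ∑ j, L i j * V j k
        = (Real.sqrt (r i))⁻¹ * ∑ j, LB i j * ((Real.sqrt (r j))⁻¹ * V j k) := by
      rw [Finset.mul_sum]
      exact Finset.sum_congr rfl fun j _ => by rw [hL i j]; ring
    rw [h2] at h1
    have h3 := congrArg (fun x => Real.sqrt (r i) * x) h1
    simpa [← mul_assoc, mul_inv_cancel₀ (hsne i)] using h3
  -- completeness: ∑ k α k * V i k = (√rᵢ)⁻¹ u0 i
  have hVVT : V * V.transpose = 1 := mul_eq_one_comm.mp hV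
  have hcomp : ∑ k, α k * V i k = (Real.sqrt (r i))⁻¹ * u0 i := by
    have step1 : ∑ k, α k * V i k
        = ∑ k, ∑ j, V i k * V j k * ((Real.sqrt (r j))⁻¹ * u0 j) := by
      refine Finset.sum_congr rfl fun k _ => ?_
      rw [hα k, Finset.sum_mul]
      exact Finset.sum_congr rfl fun j _ => by ring
    have step2 : ∑ k, ∑ j, V i k * V j k * ((Real.sqrt (r j))⁻¹ * u0 j)
        = ∑ j, (∑ k, V i k * V j k) * ((Real.sqrt (r j))⁻¹ * u0 j) := by
      rw [Finset.sum_comm]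
      exact Finset.sum_congr rfl fun j _ => by rw [Finset.sum_mul]
    rw [step1, step2]
    have hid : ∀ j, (∑ k, V i k * V j k) = if i = j then (1:ℝ) else 0 := by
      intro j
      have := congrFun (congrFun hVVT i) j
      simpa [Matrix.mul_apply, Matrix.one_apply, Matrix.transpose_apply] using this
    rw [Finset.sum_congr rfl fun j _ => by rw [hid j]]
    simp
  -- put everything together
  rw [hderivω.deriv, hω i t]
  have hθsum : ∑ j, LB i j * θ j t
      = ∑ k, α k * H k * (Real.sqrt (r i) * (lam k * V i k)) := by
    have step1 : ∑ j, LB i j * θ j t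
        = ∑ j, ∑ k, α k * H k * (LB i j * ((Real.sqrt (r j))⁻¹ * V j k)) := by
      refine Finset.sum_congr rfl fun j _ => ?_
      rw [hθ' j, Finset.mul_sum]
      exact Finset.sum_congr rfl fun k _ => by ring
    have step2 : ∑ j, ∑ k, α k * H k * (LB i j * ((Real.sqrt (r j))⁻¹ * V j k))
        = ∑ k, α k * H k * (∑ j, LB i j * ((Real.sqrt (r j))⁻¹ * V j k)) := by
      rw [Finset.sum_comm]
      exact Finset.sum_congr rfl fun k _ => by rw [Finset.mul_sum]
    rw [step1, step2]
    exact Finset.sum_congr rfl fun k _ => by rw [heig' k]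
  rw [hθsum, Finset.mul_sum, Finset.mul_sum, ← Finset.sum_add_distrib,
    ← Finset.sum_add_distrib]
  have hri : r i * (Real.sqrt (r i))⁻¹ = Real.sqrt (r i) := by
    rw [← hss i, Real.sqrt_mul_self (hs i).le, mul_inv_cancel_right₀ (hsne i)]
  have : ∀ k, r i * m * (α k * h' k t * ((Real.sqrt (r i))⁻¹ * V i k))
      + r i * d * (α k * h k t * ((Real.sqrt (r i))⁻¹ * V i k))
      + α k * H k * (Real.sqrt (r i) * (lam k * V i k))
      = Real.sqrt (r i) * ((m * h' k t + d * h k t + lam k * H k) * (α k * V i k)) := by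
    intro k
    linear_combination (Real.sqrt (r i) * m * α k * h' k t * V i k
        + Real.sqrt (r i) * d * α k * h k t * V i k) * mul_inv_cancel₀ (hsne i)
      - ((Real.sqrt (r i))⁻¹ * m * α k * h' k t * V i k
        + (Real.sqrt (r i))⁻¹ * d * α k * h k t * V i k) * hss i
  rw [Finset.sum_congr rfl fun k _ => this k]
  rw [Finset.sum_congr rfl fun k _ => by rw [hA k, one_mul]]
  rw [← Finset.mul_sum, hcomp]
  rw [← mul_assoc, mul_inv_cancel₀ (hsne i), one_mul]
end

section
/- Let n ≥ 2, m, d, ρ > 0, and let V be a real orthogonal n×n matrix whose first column is v_1 = (1/√n)·1. Let 0 = λ_1 and suppose λ_k ≥ (n − 3/4)·d²/m for all k ∈ {2,…,n}. Define h_1(t) = (1/d)(1 − e^{−(d/m)t}) and, for k ≥ 2, h_k(t) = (e^{−(d/(2m))t}/(m·ω_{d,k}))·sin(ω_{d,k}·t) with ω_{d,k} := √(4λ_k m − d²)/(2m) (well-defined since λ_k > d²/(4m)). For any u_0 ∈ ℝ^n with ‖u_0‖_2 ≤ ρ, set α = V^T u_0 and ω_i(t) = Σ_{k=1}^n α_k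 h_k(t) v_{k,i}. Then for every i ∈ {1,…,n} and every t ≥ 0: |ω_i(t)| ≤ ρ/(d√n). -/
private lemma stmt11_key (a b x ρ : ℝ) (ha : 0 ≤ a) (hb : 0 ≤ b) (hρ : 0 ≤ ρ)
    (hx0 : 0 ≤ x) (hx1 : x ≤ 1) (hab : a^2 + b^2 ≤ ρ^2) :
    a * (1 - x^2) + b * x ≤ ρ := by
  have hx2 : 0 ≤ 1 - x^2 := by nlinarith
  have h1 : (a * (1 - x^2) + b * x)^2 ≤ (a^2+b^2) * ((1-x^2)^2 + x^2) := by
    nlinarith [sq_nonneg (a*x - b*(1-x^2))]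
  have h2 : (1-x^2)^2 + x^2 ≤ 1 := by nlinarith [mul_nonneg (sq_nonneg x) hx2]
  have h3 : (a * (1 - x^2) + b * x)^2 ≤ ρ^2 := by
    calc (a * (1 - x^2) + b * x)^2 ≤ (a^2+b^2) * ((1-x^2)^2 + x^2) := h1
      _ ≤ (a^2+b^2) * 1 := mul_le_mul_of_nonneg_left h2 (by positivity)
      _ ≤ ρ^2 := by linarith
  have hL0 : 0 ≤ a * (1 - x^2) + b * x := by positivity
  nlinarith [h3]

/-- Upper-bound part of Theorem 2 (homogeneous network with strong connectivity):
if `λ₂ ≥ (n − 3/4) d²/m`, then for every disturbance with `‖u₀‖₂ ≤ ρ`, every bus `i`,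
and every `t ≥ 0`, the frequency deviation `ωᵢ(t) = ∑ₖ αₖ hₖ(t) v_{k,i}` (with
`α = Vᵀu₀`) satisfies `|ωᵢ(t)| ≤ ρ/(d√n)`. -/
theorem stmt11 (n : ℕ) (hn : 2 ≤ n)
    (m d ρ : ℝ) (hm : 0 < m) (hd : 0 < d) (hρ : 0 < ρ)
    (V : Matrix (Fin n) (Fin n) ℝ) (hV : V.transpose * V = 1)
    (hv1 : ∀ j, V j ⟨0, by omega⟩ = 1 / Real.sqrt n)
    (lam : Fin n → ℝ) (hlam0 : lam ⟨0, by omega⟩ = 0)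
    (hlam : ∀ k, k ≠ (⟨0, by omega⟩ : Fin n) →
      ((n : ℝ) - 3 / 4) * d ^ 2 / m ≤ lam k)
    (h : Fin n → ℝ → ℝ)
    (h1def : ∀ t, h ⟨0, by omega⟩ t = (1 / d) * (1 - Real.exp (-(d / m) * t)))
    (hkdef : ∀ k, k ≠ (⟨0, by omega⟩ : Fin n) → ∀ t,
      h k t = Real.exp (-(d / (2 * m)) * t) /
          (m * (Real.sqrt (4 * lam k * m - d ^ 2) / (2 * m))) *
        Real.sin (Real.sqrt (4 * lam k * m - d ^ 2) / (2 * m) * t))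
    (u0 : Fin n → ℝ) (hu0 : Real.sqrt (∑ j, (u0 j) ^ 2) ≤ ρ)
    (α : Fin n → ℝ) (hα : ∀ k, α k = ∑ j, V j k * u0 j)
    (ω : Fin n → ℝ → ℝ)
    (hω : ∀ i t, ω i t = ∑ k, α k * h k t * V i k) :
    ∀ i, ∀ t, 0 ≤ t → |ω i t| ≤ ρ / (d * Real.sqrt n) := by
  intro i t ht
  set z : Fin n := ⟨0, by omega⟩ with hzdef
  have hn2 : (2:ℝ) ≤ (n:ℝ) := by exact_mod_cast hn
  have hnpos : (0:ℝ) < n := by linarith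
  have hn1 : (0:ℝ) < (n:ℝ) - 1 := by linarith
  have hsn : 0 < Real.sqrt n := Real.sqrt_pos.2 hnpos
  have hsn1 : 0 < Real.sqrt ((n:ℝ) - 1) := Real.sqrt_pos.2 hn1
  set x := Real.exp (-(d/(2*m))*t) with hxdef
  have hx0 : 0 < x := Real.exp_pos _
  have hx1 : x ≤ 1 := by
    rw [hxdef]
    rw [Real.exp_le_one_iff]
    have : 0 ≤ d / (2*m) * t := by positivity
    linarith
  have hxsq : x^2 = Real.exp (-(d/m)*t) := by
    rw [hxdef, sq, ← Real.exp_add]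
    congr 1
    field_simp
    ring
  -- rows of V are orthonormal
  have hVV : V * V.transpose = 1 := mul_eq_one_comm.mp hV
  have hrow : ∀ a b : Fin n, (∑ k, V a k * V b k) = if a = b then 1 else 0 := by
    intro a b
    have := congrArg (fun M => M a b) hVV
    simpa [Matrix.mul_apply, Matrix.transpose_apply, Matrix.one_apply] using this
  -- norm preservation
  have hα2 : ∑ k, (α k)^2 = ∑ j, (u0 j)^2 := by
    calc ∑ k, (α k)^2
        = ∑ k, ∑ j, ∑ j', (u0 j * u0 j') * (V j k * V j' k) := by
          refine Finset.sum_congr rfl fun k _ => ?_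
          rw [hα, sq, Finset.sum_mul_sum]
          exact Finset.sum_congr rfl fun j _ => Finset.sum_congr rfl fun j' _ => by ring
      _ = ∑ j, ∑ j', (u0 j * u0 j') * ∑ k, V j k * V j' k := by
          rw [Finset.sum_comm]
          refine Finset.sum_congr rfl fun j _ => ?_
          rw [Finset.sum_comm]
          refine Finset.sum_congr rfl fun j' _ => ?_
          rw [Finset.mul_sum]
      _ = ∑ j, (u0 j)^2 := by
          refine Finset.sum_congr rfl fun j _ => ?_
          rw [Finset.sum_congr rfl (fun j' _ => by rw [hrow j j'])]
          simp [sq]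
  have hsum_u0 : ∑ j, (u0 j)^2 ≤ ρ^2 := by
    have h0 : 0 ≤ ∑ j, (u0 j)^2 := Finset.sum_nonneg fun _ _ => sq_nonneg _
    nlinarith [Real.sq_sqrt h0, Real.sqrt_nonneg (∑ j, (u0 j)^2)]
  have hsplit : ∀ (f : Fin n → ℝ),
      ∑ k, f k = f z + ∑ k ∈ Finset.univ.erase z, f k := by
    intro f
    rw [← Finset.add_sum_erase _ f (Finset.mem_univ z)]
  -- row i facts
  have hrowi : ∑ k, (V i k)^2 = 1 := by
    have := hrow i i
    simpa [sq] using this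
  have hViz : (V i z)^2 = 1/(n:ℝ) := by
    rw [hv1 i, div_pow, one_pow, Real.sq_sqrt hnpos.le]
  have hB : ∑ k ∈ Finset.univ.erase z, (V i k)^2 = 1 - 1/(n:ℝ) := by
    have h1 := hsplit (fun k => (V i k)^2)
    rw [hrowi] at h1
    rw [hViz] at h1
    linarith
  -- α facts
  set A := ∑ k ∈ Finset.univ.erase z, (α k)^2 with hAdef
  have hA0 : 0 ≤ A := Finset.sum_nonneg fun _ _ => sq_nonneg _
  have habρ : (α z)^2 + A ≤ ρ^2 := by
    have h1 := hsplit (fun k => (α k)^2)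
    rw [hα2] at h1
    linarith
  -- bound on h z
  have hhz : h z t = (1/d) * (1 - x^2) := by rw [h1def, hxsq]
  have hx2 : 0 ≤ 1 - x^2 := by nlinarith
  -- bound on h k, k ≠ z
  have hk_bound : ∀ k ∈ Finset.univ.erase z, |h k t| ≤ x / (d * Real.sqrt ((n:ℝ)-1)) := by
    intro k hk
    have hkz : k ≠ z := Finset.ne_of_mem_erase hk
    have hlamk := hlam k hkz
    have h4 : ((n:ℝ) - 3/4) * d^2 ≤ lam k * m := by
      rw [div_le_iff₀ hm] at hlamk
      linarith
    have harg : 4 * ((n:ℝ)-1) * d^2 ≤ 4 * lam k * m - d^2 := by linarith [h4]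
    have hnd : 0 < 4 * ((n:ℝ)-1) * d^2 :=
      mul_pos (mul_pos (by norm_num) hn1) (pow_pos hd 2)
    have hargpos : 0 < 4 * lam k * m - d^2 := by linarith
    have he : (2*(d*Real.sqrt ((n:ℝ)-1)))^2 = 4*((n:ℝ)-1)*d^2 := by
      rw [mul_pow, mul_pow, Real.sq_sqrt hn1.le]
      ring
    have hsqrt_ge : 2 * (d * Real.sqrt ((n:ℝ)-1)) ≤ Real.sqrt (4 * lam k * m - d^2) :=
      Real.le_sqrt_of_sq_le (he ▸ harg)
    have hden : d * Real.sqrt ((n:ℝ)-1) ≤ m * (Real.sqrt (4 * lam k * m - d^2) / (2*m)) := by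
      rw [show m * (Real.sqrt (4 * lam k * m - d^2) / (2*m))
          = Real.sqrt (4 * lam k * m - d^2) / 2 by field_simp]
      linarith
    have hdenpos : 0 < d * Real.sqrt ((n:ℝ)-1) := by positivity
    have hdenpos2 : 0 < m * (Real.sqrt (4 * lam k * m - d^2) / (2*m)) := by
      linarith
    rw [hkdef k hkz t, abs_mul, abs_div]
    rw [abs_of_pos (Real.exp_pos _), abs_of_pos hdenpos2]
    calc x / (m * (Real.sqrt (4 * lam k * m - d^2) / (2*m))) *
          |Real.sin (Real.sqrt (4 * lam k * m - d^2) / (2*m) * t)|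
        ≤ x / (m * (Real.sqrt (4 * lam k * m - d^2) / (2*m))) * 1 := by
          apply mul_le_mul_of_nonneg_left (abs_le.mpr ⟨Real.neg_one_le_sin _, Real.sin_le_one _⟩) (by positivity)
      _ = x / (m * (Real.sqrt (4 * lam k * m - d^2) / (2*m))) := mul_one _
      _ ≤ x / (d * Real.sqrt ((n:ℝ)-1)) := by
          apply div_le_div_of_nonneg_left hx0.le hdenpos hden
  -- Cauchy-Schwarz over the tail
  set S := Finset.univ.erase z with hSdef
  have hCS : ∑ k ∈ S, |α k| * |V i k| ≤ Real.sqrt A * Real.sqrt (1 - 1/(n:ℝ)) := by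
    have h1 := Finset.sum_mul_sq_le_sq_mul_sq S (fun k => |α k|) (fun k => |V i k|)
    simp only [sq_abs] at h1
    rw [hB] at h1
    have hp0 : 0 ≤ ∑ k ∈ S, |α k| * |V i k| :=
      Finset.sum_nonneg fun k _ => mul_nonneg (abs_nonneg _) (abs_nonneg _)
    calc ∑ k ∈ S, |α k| * |V i k|
        = Real.sqrt ((∑ k ∈ S, |α k| * |V i k|)^2) := (Real.sqrt_sq hp0).symm
      _ ≤ Real.sqrt (A * (1 - 1/(n:ℝ))) := Real.sqrt_le_sqrt h1
      _ = Real.sqrt A * Real.sqrt (1 - 1/(n:ℝ)) := Real.sqrt_mul hA0 _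
  -- tail bound
  have T2 : |∑ k ∈ S, α k * h k t * V i k|
      ≤ x / (d * Real.sqrt ((n:ℝ)-1)) * (Real.sqrt A * Real.sqrt (1 - 1/(n:ℝ))) := by
    calc |∑ k ∈ S, α k * h k t * V i k|
        ≤ ∑ k ∈ S, |α k * h k t * V i k| := Finset.abs_sum_le_sum_abs _ _
      _ ≤ ∑ k ∈ S, x / (d * Real.sqrt ((n:ℝ)-1)) * (|α k| * |V i k|) := by
          refine Finset.sum_le_sum fun k hk => ?_
          rw [abs_mul, abs_mul]
          have hnn : 0 ≤ |α k| * |V i k| := mul_nonneg (abs_nonneg _) (abs_nonneg _)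
          calc |α k| * |h k t| * |V i k| = (|α k| * |V i k|) * |h k t| := by ring
            _ ≤ (|α k| * |V i k|) * (x / (d * Real.sqrt ((n:ℝ)-1))) :=
                mul_le_mul_of_nonneg_left (hk_bound k hk) hnn
            _ = x / (d * Real.sqrt ((n:ℝ)-1)) * (|α k| * |V i k|) := by ring
      _ = x / (d * Real.sqrt ((n:ℝ)-1)) * ∑ k ∈ S, |α k| * |V i k| := by
          rw [Finset.mul_sum]
      _ ≤ x / (d * Real.sqrt ((n:ℝ)-1)) * (Real.sqrt A * Real.sqrt (1 - 1/(n:ℝ))) := by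
          apply mul_le_mul_of_nonneg_left hCS (by positivity)
  -- simplify sqrt(1-1/n)
  have hs1n : Real.sqrt (1 - 1/(n:ℝ)) = Real.sqrt ((n:ℝ)-1) / Real.sqrt n := by
    rw [show (1 - 1/(n:ℝ)) = ((n:ℝ)-1)/(n:ℝ) by field_simp]
    rw [Real.sqrt_div hn1.le]
  have T2' : |∑ k ∈ S, α k * h k t * V i k| ≤ x * Real.sqrt A / (d * Real.sqrt n) := by
    refine T2.trans (le_of_eq ?_)
    rw [hs1n]
    field_simp
  -- head bound
  have T1 : |α z * h z t * V i z| = |α z| * ((1/d) * (1 - x^2)) * (1 / Real.sqrt n) := by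
    rw [abs_mul, abs_mul, hhz, hv1 i]
    rw [abs_of_nonneg (by positivity : (0:ℝ) ≤ (1/d) * (1 - x^2)),
      abs_of_nonneg (by positivity : (0:ℝ) ≤ 1 / Real.sqrt n)]
  -- combine
  have hωeq : ω i t = α z * h z t * V i z + ∑ k ∈ S, α k * h k t * V i k := by
    rw [hω, hsplit (fun k => α k * h k t * V i k)]
  have hmain : |α z| * (1 - x^2) + Real.sqrt A * x ≤ ρ := by
    apply stmt11_key _ _ _ _ (abs_nonneg _) (Real.sqrt_nonneg _) hρ.le hx0.le hx1
    rw [Real.sq_sqrt hA0, sq_abs]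
    exact habρ
  calc |ω i t| ≤ |α z * h z t * V i z| + |∑ k ∈ S, α k * h k t * V i k| := by
        rw [hωeq]; exact abs_add_le _ _
    _ ≤ |α z| * ((1/d) * (1 - x^2)) * (1 / Real.sqrt n)
        + x * Real.sqrt A / (d * Real.sqrt n) := by
        rw [T1]; linarith [T2']
    _ = (|α z| * (1 - x^2) + Real.sqrt A * x) / (d * Real.sqrt n) := by
        field_simp
    _ ≤ ρ / (d * Real.sqrt n) := by
        gcongr
end
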